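/- arXiv:0910.4003 — 2 statements merged into one kernel-verified Lean document; each statement's English description precedes it below -/
import Mathlib

section
/- For every μ > 0 the functions τ ↦ f^μ(τ) p_c'(τ) and τ ↦ (k_a(τ)/(k_a(τ) + μ k_w(τ))) p_c'(τ) are integrable on [0,1) (the integrals being improper at τ = 1), and for every s ∈ [0,1] one has R^μ(s) + Q^μ(s) = p_c(s) − p_c(0). -/
/-!
The two weights `ka / (ka + μ kw)` and `kw / (kw + ka / μ)` are continuous on `[0, 1]` (their
denominators are `μ` times each other and `ka + μ kw > 0` there) and add up to `1`. Since `p_c` is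
continuous and monotone, `p_c'` is integrable on `[0, 1]`; continuous weights preserve
integrability, and adding the two integrals leaves `∫₀ˢ p_c' = p_c(s) - p_c(0)`.
-/

open Set MeasureTheory intervalIntegral

theorem intervalIntegrable_deriv_of_nonpos {g g' : ℝ → ℝ} {a b : ℝ}
    (hcont : ContinuousOn g (uIcc a b))
    (hderiv : ∀ x ∈ Ioo (min a b) (max a b), HasDerivAt g (g' x) x)
    (hneg : ∀ x ∈ Ioo (min a b) (max a b), g' x ≤ 0) : IntervalIntegrable g' volume a b := by
  simpa [Pi.neg_def] using (intervalIntegrable_deriv_of_nonneg hcont.neg (fun x hx => (hderiv x hx).neg)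
    fun x hx => neg_nonneg.2 (hneg x hx)).neg

theorem add_one_div_mul_eq_div {a b μ : ℝ} (hμ : μ ≠ 0) : b + 1 / μ * a = (a + μ * b) / μ := by
  field_simp
  ring

theorem div_add_mul_add_div_eq_one {a b μ : ℝ} (hμ : μ ≠ 0) (h : a + μ * b ≠ 0) :
    a / (a + μ * b) + b / (b + 1 / μ * a) = 1 := by
  rw [add_one_div_mul_eq_div hμ, div_div_eq_mul_div, ← add_div, div_eq_one_iff_eq h]
  ring

theorem add_mul_pos_of_mem_Icc {kw ka : ℝ → ℝ} {μ : ℝ} (hμ : 0 < μ)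
    (hkwm : MonotoneOn kw (Icc 0 1)) (hkw0 : kw 0 = 0) (hkw1 : kw 1 = 1) (hka1 : ka 1 = 0)
    (hkapos : ∀ s ∈ Ico (0:ℝ) 1, 0 < ka s) {τ : ℝ} (hτ : τ ∈ Icc (0:ℝ) 1) :
    0 < ka τ + μ * kw τ := by
  rcases hτ.2.eq_or_lt with rfl | hlt
  · simpa [hka1, hkw1] using hμ
  · have hkw : 0 ≤ kw τ := hkw0 ▸ hkwm (left_mem_Icc.2 zero_le_one) hτ hτ.1
    have hka : 0 < ka τ := hkapos τ ⟨hτ.1, hlt⟩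
    positivity

theorem stmt_5_general (kw ka pc pc' : ℝ → ℝ)
    (hkwc : ContinuousOn kw (Icc 0 1))
    (hkwm : MonotoneOn kw (Icc 0 1))
    (hkw0 : kw 0 = 0) (hkw1 : kw 1 = 1)
    (hkac : ContinuousOn ka (Icc 0 1))
    (hka1 : ka 1 = 0)
    (hkapos : ∀ s ∈ Ico (0:ℝ) 1, 0 < ka s)
    (hpcc : ContinuousOn pc (Icc 0 1))
    (hpcd : ∀ s ∈ Ico (0:ℝ) 1, HasDerivWithinAt pc (pc' s) (Icc 0 1) s)
    (hpc'neg : ∀ s ∈ Ico (0:ℝ) 1, pc' s < 0)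
    (μ : ℝ) (hμ : 0 < μ) :
    IntervalIntegrable (fun τ => (kw τ / (kw τ + (1/μ) * ka τ)) * pc' τ) volume 0 1 ∧
    IntervalIntegrable (fun τ => (ka τ / (ka τ + μ * kw τ)) * pc' τ) volume 0 1 ∧
    ∀ s ∈ Icc (0:ℝ) 1,
      (∫ τ in (0:ℝ)..s, (ka τ / (ka τ + μ * kw τ)) * pc' τ) +
      (∫ τ in (0:ℝ)..s, (kw τ / (kw τ + (1/μ) * ka τ)) * pc' τ) = pc s - pc 0 := by
  have hden : ∀ τ ∈ Icc (0:ℝ) 1, ka τ + μ * kw τ ≠ 0 := fun τ hτ =>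
    (add_mul_pos_of_mem_Icc hμ hkwm hkw0 hkw1 hka1 hkapos hτ).ne'
  have hden' : ∀ τ ∈ Icc (0:ℝ) 1, kw τ + 1 / μ * ka τ ≠ 0 := fun τ hτ => by
    rw [add_one_div_mul_eq_div hμ.ne']
    exact div_ne_zero (hden τ hτ) hμ.ne'
  have hderiv : ∀ x ∈ Ioo (0:ℝ) 1, HasDerivAt pc (pc' x) x := fun x hx =>
    (hpcd x ⟨hx.1.le, hx.2⟩).hasDerivAt (Icc_mem_nhds hx.1 hx.2)
  have hpc' : IntervalIntegrable pc' volume 0 1 := by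
    refine intervalIntegrable_deriv_of_nonpos (by rwa [uIcc_of_le zero_le_one]) ?_ ?_ <;>
      simp only [zero_le_one, min_eq_left, max_eq_right]
    · exact hderiv
    · exact fun x hx => (hpc'neg x ⟨hx.1.le, hx.2⟩).le
  have hQ : IntervalIntegrable (fun τ => (kw τ / (kw τ + (1/μ) * ka τ)) * pc' τ) volume 0 1 :=
    hpc'.continuousOn_mul <| by
      rw [uIcc_of_le zero_le_one]
      exact hkwc.div (hkwc.add (continuousOn_const.mul hkac)) hden'
  have hR : IntervalIntegrable (fun τ => (ka τ / (ka τ + μ * kw τ)) * pc' τ) volume 0 1 :=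
    hpc'.continuousOn_mul <| by
      rw [uIcc_of_le zero_le_one]
      exact hkac.div (hkac.add (continuousOn_const.mul hkwc)) hden
  refine ⟨hQ, hR, fun s hs => ?_⟩
  have hsub : uIcc 0 s ⊆ uIcc (0:ℝ) 1 := uIcc_subset_uIcc_left (by simpa using hs)
  have hsub' : Icc 0 s ⊆ Icc (0:ℝ) 1 := Icc_subset_Icc_right hs.2
  rw [← integral_add (hR.mono_set hsub) (hQ.mono_set hsub),
    ← integral_eq_sub_of_hasDerivAt_of_le hs.1 (hpcc.mono hsub')
      (fun x hx => hderiv x ⟨hx.1, hx.2.trans_le hs.2⟩) (hpc'.mono_set hsub)]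
  refine integral_congr fun τ hτ => ?_
  rw [uIcc_of_le hs.1] at hτ
  simp only [← add_mul, div_add_mul_add_div_eq_one hμ.ne' (hden τ (hsub' hτ)), one_mul]

/-- For every μ > 0, the functions τ ↦ f^μ(τ) p_c'(τ) and
τ ↦ (k_a(τ)/(k_a(τ)+μ k_w(τ))) p_c'(τ) are integrable on [0,1), and for every
s ∈ [0,1] one has R^μ(s) + Q^μ(s) = p_c(s) − p_c(0). -/
theorem stmt_5 (kw ka pc pc' : ℝ → ℝ)
    (hkwc : ContinuousOn kw (Icc 0 1))
    (hkwm : MonotoneOn kw (Icc 0 1))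
    (hkw0 : kw 0 = 0) (hkw1 : kw 1 = 1)
    (hkac : ContinuousOn ka (Icc 0 1))
    (hkaa : AntitoneOn ka (Icc 0 1))
    (hka0 : ka 0 = 1) (hka1 : ka 1 = 0)
    (hkapos : ∀ s ∈ Ico (0:ℝ) 1, 0 < ka s)
    (hpcc : ContinuousOn pc (Icc 0 1))
    (hpcd : ∀ s ∈ Ico (0:ℝ) 1, HasDerivWithinAt pc (pc' s) (Icc 0 1) s)
    (hpc'c : ContinuousOn pc' (Ico 0 1))
    (hpc'neg : ∀ s ∈ Ico (0:ℝ) 1, pc' s < 0)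
    (μ : ℝ) (hμ : 0 < μ) :
    IntervalIntegrable (fun τ => (kw τ / (kw τ + (1/μ) * ka τ)) * pc' τ) volume 0 1 ∧
    IntervalIntegrable (fun τ => (ka τ / (ka τ + μ * kw τ)) * pc' τ) volume 0 1 ∧
    ∀ s ∈ Icc (0:ℝ) 1,
      (∫ τ in (0:ℝ)..s, (ka τ / (ka τ + μ * kw τ)) * pc' τ) +
      (∫ τ in (0:ℝ)..s, (kw τ / (kw τ + (1/μ) * ka τ)) * pc' τ) = pc s - pc 0 :=
  stmt_5_general kw ka pc pc' hkwc hkwm hkw0 hkw1 hkac hka1 hkapos hpcc hpcd hpc'neg μ hμ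
end

section
/- The function τ ↦ √(k_a(τ)) |p_c'(τ)| is integrable on [0,1) (the integral being improper at τ = 1), so ζ is well defined on [0,1]; moreover ζ is nonincreasing and |ζ(s)| ≤ √(C_g · (p_c(0) − p_c(1))) for every s ∈ [0,1]. -/
open Set MeasureTheory

/-! Since `k_a |p_c'| ≤ C_g`, AM–GM gives `√k_a |p_c'| ≤ (λ C_g + |p_c'| / λ) / 2`
for every `λ > 0`. As `p_c` is decreasing, `|p_c'| = -p_c'` is integrable with total integral
`p_c(0) - p_c(1)`; so the right-hand side is an integrable majorant, and integrating over
`[0, s]` and optimising in `λ` yields the Cauchy–Schwarz bound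
`∫₀ˢ √k_a |p_c'| ≤ √(C_g s ∫₀ˢ |p_c'|) ≤ √(C_g (p_c(0) - p_c(1)))`.
Monotonicity of `ζ` is just the sign of its integrand. -/

theorem sqrt_mul_le_half_add_of_mul_le {k u C l : ℝ} (hk : 0 ≤ k) (hu : 0 ≤ u)
    (hku : k * u ≤ C) (hl : 0 < l) : Real.sqrt k * u ≤ (l * C + u / l) / 2 := by
  refine le_of_mul_le_mul_left ?_ (by positivity : 0 < 2 * l)
  calc 2 * l * (Real.sqrt k * u) = l ^ 2 * (k * u) + u - u * (l * Real.sqrt k - 1) ^ 2 := by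
        linear_combination u * l ^ 2 * Real.sq_sqrt hk
    _ ≤ l ^ 2 * C + u := by
        nlinarith [mul_le_mul_of_nonneg_left hku (sq_nonneg l),
          mul_nonneg hu (sq_nonneg (l * Real.sqrt k - 1))]
    _ = 2 * l * ((l * C + u / l) / 2) := by field_simp

theorem le_sqrt_mul_of_forall_le_half_add {X A B : ℝ} (hA : 0 ≤ A) (hB : 0 ≤ B)
    (h : ∀ l, 0 < l → X ≤ (l * A + B / l) / 2) : X ≤ Real.sqrt (A * B) := by
  rcases le_or_gt X 0 with hX | hX
  · exact hX.trans (Real.sqrt_nonneg _)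
  rw [Real.le_sqrt' hX]
  rcases hA.eq_or_lt with rfl | hA
  · have := h ((B + 1) / X) (by positivity)
    field_simp at this
    nlinarith
  · have := h (X / A) (div_pos hX hA)
    field_simp at this
    nlinarith

theorem integral_abs_deriv_eq_sub_of_nonpos {g g' : ℝ → ℝ} {a b : ℝ} (hab : a ≤ b)
    (hcont : ContinuousOn g (Icc a b)) (hderiv : ∀ x ∈ Ioo a b, HasDerivAt g (g' x) x)
    (hnonpos : ∀ x ∈ Ioo a b, g' x ≤ 0) :
    IntervalIntegrable (fun x => |g' x|) volume a b ∧ ∫ x in a..b, |g' x| = g a - g b := by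
  have habs : EqOn (fun x => -g' x) (fun x => |g' x|) (uIoo a b) := by
    rw [uIoo_of_le hab]
    exact fun x hx => (abs_of_nonpos (hnonpos x hx)).symm
  have hint : IntervalIntegrable (fun x => -g' x) volume a b :=
    (intervalIntegrable_iff_integrableOn_Ioc_of_le hab).2 <|
      intervalIntegral.integrableOn_deriv_of_nonneg hcont.neg (fun x hx => (hderiv x hx).neg)
        fun x hx => neg_nonneg.2 (hnonpos x hx)
  refine ⟨hint.congr_uIoo habs, ?_⟩
  rw [← intervalIntegral.integral_congr_uIoo habs,
    intervalIntegral.integral_eq_sub_of_hasDerivAt_of_le hab hcont.neg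
      (fun x hx => (hderiv x hx).neg) hint, Pi.neg_apply, Pi.neg_apply, neg_sub_neg]

theorem integral_mul_eq_neg_integral_mul_abs {f g : ℝ → ℝ} {a b : ℝ} (hab : a ≤ b)
    (hg : ∀ x ∈ Ioo a b, g x ≤ 0) :
    ∫ x in a..b, f x * g x = -∫ x in a..b, f x * |g x| := by
  rw [← intervalIntegral.integral_neg, intervalIntegral.integral_congr_uIoo]
  rw [uIoo_of_le hab]
  intro x hx
  dsimp only
  rw [abs_of_nonpos (hg x hx), mul_neg, neg_neg]

section SqrtMulIntegral

variable {a b C : ℝ} {k u : ℝ → ℝ}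

theorem integral_nonneg_of_forall_mem_Ioo (hab : a ≤ b) (hu : ∀ τ ∈ Ioo a b, 0 ≤ u τ) :
    0 ≤ ∫ τ in a..b, u τ :=
  intervalIntegral.integral_nonneg_of_ae_restrict hab <| by
    rw [← restrict_Ioo_eq_restrict_Icc]
    exact ae_restrict_of_forall_mem measurableSet_Ioo hu

theorem intervalIntegrable_sqrt_mul_of_mul_le (hab : a ≤ b)
    (hk_cont : ContinuousOn k (Ioo a b)) (hu_cont : ContinuousOn u (Ioo a b))
    (hk : ∀ τ ∈ Ioo a b, 0 ≤ k τ) (hu : ∀ τ ∈ Ioo a b, 0 ≤ u τ)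
    (hku : ∀ τ ∈ Ioo a b, k τ * u τ ≤ C) (hu_int : IntervalIntegrable u volume a b) :
    IntervalIntegrable (fun τ => Real.sqrt (k τ) * u τ) volume a b := by
  rw [intervalIntegrable_iff_integrableOn_Ioo_of_le hab] at hu_int ⊢
  refine Integrable.mono' ((integrable_const C).add hu_int |>.div_const 2) ?_ ?_
  · exact ((Real.continuous_sqrt.comp_continuousOn hk_cont).mul hu_cont).aestronglyMeasurable
      measurableSet_Ioo
  · refine ae_restrict_of_forall_mem measurableSet_Ioo fun τ hτ => ?_
    rw [Real.norm_of_nonneg (mul_nonneg (Real.sqrt_nonneg _) (hu τ hτ))]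
    simpa using sqrt_mul_le_half_add_of_mul_le (hk τ hτ) (hu τ hτ) (hku τ hτ) one_pos

theorem integral_sqrt_mul_le_sqrt_mul_integral (hab : a ≤ b)
    (hk_cont : ContinuousOn k (Ioo a b)) (hu_cont : ContinuousOn u (Ioo a b))
    (hk : ∀ τ ∈ Ioo a b, 0 ≤ k τ) (hu : ∀ τ ∈ Ioo a b, 0 ≤ u τ)
    (hku : ∀ τ ∈ Ioo a b, k τ * u τ ≤ C) (hC : 0 ≤ C)
    (hu_int : IntervalIntegrable u volume a b) :
    ∫ τ in a..b, Real.sqrt (k τ) * u τ ≤ Real.sqrt (C * (b - a) * ∫ τ in a..b, u τ) := by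
  refine le_sqrt_mul_of_forall_le_half_add (mul_nonneg hC (sub_nonneg.2 hab))
    (integral_nonneg_of_forall_mem_Ioo hab hu) fun l hl => ?_
  calc ∫ τ in a..b, Real.sqrt (k τ) * u τ ≤ ∫ τ in a..b, (l * C + u τ / l) / 2 :=
        intervalIntegral.integral_mono_on_of_le_Ioo hab
          (intervalIntegrable_sqrt_mul_of_mul_le hab hk_cont hu_cont hk hu hku hu_int)
          ((intervalIntegrable_const.add (hu_int.div_const l)).div_const 2)
          fun τ hτ => sqrt_mul_le_half_add_of_mul_le (hk τ hτ) (hu τ hτ) (hku τ hτ) hl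
    _ = (l * (C * (b - a)) + (∫ τ in a..b, u τ) / l) / 2 := by
        rw [intervalIntegral.integral_div, intervalIntegral.integral_add intervalIntegrable_const
          (hu_int.div_const l), intervalIntegral.integral_const, intervalIntegral.integral_div,
          smul_eq_mul]
        ring

theorem integral_sqrt_mul_le_sqrt_mul_integral_of_mem_Icc
    (hk_cont : ContinuousOn k (Ioo a b)) (hu_cont : ContinuousOn u (Ioo a b))
    (hk : ∀ τ ∈ Ioo a b, 0 ≤ k τ) (hu : ∀ τ ∈ Ioo a b, 0 ≤ u τ)
    (hku : ∀ τ ∈ Ioo a b, k τ * u τ ≤ C) (hC : 0 ≤ C)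
    (hu_int : IntervalIntegrable u volume a b) {s : ℝ} (hs : s ∈ Icc a b) :
    ∫ τ in a..s, Real.sqrt (k τ) * u τ ≤ Real.sqrt (C * (b - a) * ∫ τ in a..b, u τ) := by
  have hIoo : Ioo a s ⊆ Ioo a b := Ioo_subset_Ioo_right hs.2
  have hu_int_s : IntervalIntegrable u volume a s := hu_int.mono_set <| by
    rw [uIcc_of_le hs.1, uIcc_of_le (hs.1.trans hs.2)]
    exact Icc_subset_Icc_right hs.2
  have hu_ae : 0 ≤ᵐ[volume.restrict (Ioc a b)] u := by
    rw [← restrict_Ioo_eq_restrict_Ioc]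
    exact ae_restrict_of_forall_mem measurableSet_Ioo hu
  calc ∫ τ in a..s, Real.sqrt (k τ) * u τ
      ≤ Real.sqrt (C * (s - a) * ∫ τ in a..s, u τ) :=
        integral_sqrt_mul_le_sqrt_mul_integral hs.1 (hk_cont.mono hIoo) (hu_cont.mono hIoo)
          (fun τ hτ => hk τ (hIoo hτ)) (fun τ hτ => hu τ (hIoo hτ))
          (fun τ hτ => hku τ (hIoo hτ)) hC hu_int_s
    _ ≤ Real.sqrt (C * (b - a) * ∫ τ in a..b, u τ) := by
        refine Real.sqrt_le_sqrt (mul_le_mul ?_ ?_ ?_ ?_)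
        · exact mul_le_mul_of_nonneg_left (sub_le_sub_right hs.2 a) hC
        · exact intervalIntegral.integral_mono_interval le_rfl hs.1 hs.2 hu_ae hu_int
        · exact integral_nonneg_of_forall_mem_Ioo hs.1 fun τ hτ => hu τ (hIoo hτ)
        · exact mul_nonneg hC (sub_nonneg.2 (hs.1.trans hs.2))

end SqrtMulIntegral

theorem stmt_10_general (ka pc pc' : ℝ → ℝ) (Cg : ℝ)
    (hkac : ContinuousOn ka (Icc 0 1))
    (hkapos : ∀ s ∈ Ico (0:ℝ) 1, 0 < ka s)
    (hpcc : ContinuousOn pc (Icc 0 1))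
    (hpcd : ∀ s ∈ Ico (0:ℝ) 1, HasDerivWithinAt pc (pc' s) (Icc 0 1) s)
    (hpc'c : ContinuousOn pc' (Ico 0 1))
    (hpc'neg : ∀ s ∈ Ico (0:ℝ) 1, pc' s < 0)
    (hCg : IsLUB ((fun s => -(ka s * pc' s)) '' Ico 0 1) Cg) :
    IntervalIntegrable (fun τ => Real.sqrt (ka τ) * |pc' τ|) volume 0 1 ∧
    AntitoneOn (fun s => ∫ τ in (0:ℝ)..s, Real.sqrt (ka τ) * pc' τ) (Icc 0 1) ∧
    ∀ s ∈ Icc (0:ℝ) 1,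
      |∫ τ in (0:ℝ)..s, Real.sqrt (ka τ) * pc' τ|
        ≤ Real.sqrt (Cg * (pc 0 - pc 1)) := by
  have hIoo : Ioo (0:ℝ) 1 ⊆ Ico 0 1 := Ioo_subset_Ico_self
  have hderiv (x) (hx : x ∈ Ioo (0:ℝ) 1) : HasDerivAt pc (pc' x) x :=
    (hpcd x (hIoo hx)).hasDerivAt (Icc_mem_nhds hx.1 hx.2)
  obtain ⟨hu_int, hu_total⟩ := integral_abs_deriv_eq_sub_of_nonpos zero_le_one hpcc hderiv
    fun x hx => (hpc'neg x (hIoo hx)).le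
  have hk (τ) (hτ : τ ∈ Ioo (0:ℝ) 1) : 0 ≤ ka τ := (hkapos τ (hIoo hτ)).le
  have hu (τ) (_ : τ ∈ Ioo (0:ℝ) 1) : 0 ≤ |pc' τ| := abs_nonneg _
  have hku (τ) (hτ : τ ∈ Ioo (0:ℝ) 1) : ka τ * |pc' τ| ≤ Cg := by
    rw [abs_of_neg (hpc'neg τ (hIoo hτ)), mul_neg]
    exact hCg.1 ⟨τ, hIoo hτ, rfl⟩
  have hmid : (1 / 2 : ℝ) ∈ Ioo 0 1 := by norm_num
  have hCg_nonneg : 0 ≤ Cg := (mul_nonneg (hk _ hmid) (hu _ hmid)).trans (hku _ hmid)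
  have hk_cont : ContinuousOn ka (Ioo 0 1) := hkac.mono Ioo_subset_Icc_self
  have hu_cont : ContinuousOn (fun τ => |pc' τ|) (Ioo 0 1) := (hpc'c.mono hIoo).abs
  have hζ (s) (hs : s ∈ Icc (0:ℝ) 1) : ∫ τ in (0:ℝ)..s, Real.sqrt (ka τ) * pc' τ
      = -∫ τ in (0:ℝ)..s, Real.sqrt (ka τ) * |pc' τ| :=
    integral_mul_eq_neg_integral_mul_abs hs.1 fun τ hτ =>
      (hpc'neg τ ⟨hτ.1.le, hτ.2.trans_le hs.2⟩).le
  have hint := intervalIntegrable_sqrt_mul_of_mul_le zero_le_one hk_cont hu_cont hk hu hku hu_int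
  refine ⟨hint, fun s hs t ht hst => ?_, fun s hs => ?_⟩
  · simp only [hζ s hs, hζ t ht, neg_le_neg_iff]
    refine intervalIntegral.integral_mono_interval le_rfl hs.1 hst
      (ae_of_all _ fun τ => by positivity) (hint.mono_set ?_)
    rw [uIcc_of_le ht.1, uIcc_of_le zero_le_one]
    exact Icc_subset_Icc_right ht.2
  · rw [hζ s hs, abs_neg,
      abs_of_nonneg (intervalIntegral.integral_nonneg hs.1 fun τ _ => by positivity)]
    simpa only [sub_zero, mul_one, hu_total] using
      integral_sqrt_mul_le_sqrt_mul_integral_of_mem_Icc hk_cont hu_cont hk hu hku hCg_nonneg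
        hu_int hs

/-- τ ↦ √(k_a(τ)) |p_c'(τ)| is integrable on [0,1), so
ζ(s) = ∫₀ˢ √(k_a(τ)) p_c'(τ) dτ is well defined on [0,1]; moreover ζ is
nonincreasing and |ζ(s)| ≤ √(C_g (p_c(0) − p_c(1))) for every s ∈ [0,1]. -/
theorem stmt_10 (ka pc pc' : ℝ → ℝ) (Cg : ℝ)
    (hkac : ContinuousOn ka (Icc 0 1))
    (hkaa : AntitoneOn ka (Icc 0 1))
    (hka0 : ka 0 = 1) (hka1 : ka 1 = 0)
    (hkapos : ∀ s ∈ Ico (0:ℝ) 1, 0 < ka s)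
    (hpcc : ContinuousOn pc (Icc 0 1))
    (hpcd : ∀ s ∈ Ico (0:ℝ) 1, HasDerivWithinAt pc (pc' s) (Icc 0 1) s)
    (hpc'c : ContinuousOn pc' (Ico 0 1))
    (hpc'neg : ∀ s ∈ Ico (0:ℝ) 1, pc' s < 0)
    (hCg : IsLUB ((fun s => -(ka s * pc' s)) '' Ico 0 1) Cg) :
    IntervalIntegrable (fun τ => Real.sqrt (ka τ) * |pc' τ|) volume 0 1 ∧
    AntitoneOn (fun s => ∫ τ in (0:ℝ)..s, Real.sqrt (ka τ) * pc' τ) (Icc 0 1) ∧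
    ∀ s ∈ Icc (0:ℝ) 1,
      |∫ τ in (0:ℝ)..s, Real.sqrt (ka τ) * pc' τ|
        ≤ Real.sqrt (Cg * (pc 0 - pc 1)) :=
  stmt_10_general ka pc pc' Cg hkac hkapos hpcc hpcd hpc'c hpc'neg hCg
end
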